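/- Let X be any N×N complex matrix and let (g_m)_{m ∈ ℕ} be a sequence of invertible N×N complex matrices converging entrywise to an invertible matrix g'. Fix k ≥ 0 and indices 1 ≤ i, j ≤ N. If for every m one has X^k · (span of the first i columns of g_m) ⊆ (span of the first j columns of g_m), then X^k · (span of the first i columns of g') ⊆ (span of the first j columns of g'). -/

import Mathlib

attribute [local instance] Classical.propDecidable

noncomputable section

namespace TwoRowSpringer

/-- An arc is a pair `(init, term)` of natural numbers (with `init < term` in matchings). -/
abbrev Arc : Type := ℕ × ℕ

/-- A matching on `{1,…,N}`: a finite set of arcs with `init < term`, endpoints in `[1,N]`,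
and all `2|M|` endpoints distinct. -/
def IsMatching (N : ℕ) (M : Finset Arc) : Prop :=
  (∀ a ∈ M, a.1 < a.2 ∧ 1 ≤ a.1 ∧ a.2 ≤ N) ∧
  (∀ a ∈ M, ∀ b ∈ M, a ≠ b →
    a.1 ≠ b.1 ∧ a.1 ≠ b.2 ∧ a.2 ≠ b.1 ∧ a.2 ≠ b.2)

/-- `a` and `b` cross: `init b < init a < term b < term a`. -/
def Crosses (a b : Arc) : Prop := b.1 < a.1 ∧ a.1 < b.2 ∧ b.2 < a.2

def IsNoncrossing (M : Finset Arc) : Prop := ∀ a ∈ M, ∀ b ∈ M, ¬ Crosses a b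

/-- Standard: every integer strictly under an arc is an endpoint of some arc. -/
def IsStandard (M : Finset Arc) : Prop :=
  ∀ a ∈ M, ∀ i : ℕ, a.1 < i → i < a.2 → ∃ b ∈ M, i = b.1 ∨ i = b.2

/-- `b` is nested above `a`. -/
def NestedAbove (b a : Arc) : Prop := b.1 < a.1 ∧ a.2 < b.2

/-- `b` is the parent of `a` in `M`: nested immediately above `a`. -/
def IsParent (M : Finset Arc) (b a : Arc) : Prop :=
  b ∈ M ∧ NestedAbove b a ∧ ∀ c ∈ M, ¬ (b.1 < c.1 ∧ c.1 < a.1 ∧ a.2 < c.2)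

/-- The ancestor function: the parent if it exists, otherwise `0 = (0,0)`;
note `anc M (0,0) = (0,0)`. -/
def anc (M : Finset Arc) (a : Arc) : Arc :=
  if h : ∃ b, IsParent M b a then h.choose else (0, 0)

/-- The ancestors of `a`: `a`, its parent, the parent of its parent, and so on. -/
def ancestors (M : Finset Arc) (a : Arc) : Set Arc :=
  {b | b ≠ (0, 0) ∧ ∃ k : ℕ, (anc M)^[k] a = b}

def startsArc (M : Finset Arc) (i : ℕ) : Prop := ∃ a ∈ M, a.1 = i

def endsArc (M : Finset Arc) (i : ℕ) : Prop := ∃ a ∈ M, a.2 = i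

def onArc (M : Finset Arc) (i : ℕ) : Prop := startsArc M i ∨ endsArc M i

/-- Number of `j` with `1 ≤ j ≤ i-1` starting an arc of `M`. -/
def Jbeg (M : Finset Arc) (i : ℕ) : ℕ :=
  ((Finset.Ico 1 i).filter fun j => startsArc M j).card

/-- Number of `j` with `1 ≤ j ≤ i-1` ending an arc of `M`. -/
def Jend (M : Finset Arc) (i : ℕ) : ℕ :=
  ((Finset.Ico 1 i).filter fun j => endsArc M j).card

/-- Number of `j` with `1 ≤ j ≤ i-1` on no arc of `M`. -/
def Jnot (M : Finset Arc) (i : ℕ) : ℕ :=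
  ((Finset.Ico 1 i).filter fun j => ¬ onArc M j).card

/-- The permutation `w_M` of `{1,…,N}` attached to a standard noncrossing matching `M`
(`n` is the size of the first Jordan block). -/
def wM (n : ℕ) (M : Finset Arc) (i : ℕ) : ℕ :=
  if startsArc M i then
    ((n : ℤ) + (Jbeg M i : ℤ) + min 0 ((Jnot M i : ℤ) - ((n - M.card : ℕ) : ℤ)) + 1).toNat
  else if endsArc M i then
    Jend M i + max (Jnot M i) (n - M.card) + 1
  else if Jnot M i ≤ n - M.card then
    Jend M i + Jnot M i + 1
  else
    n + Jbeg M i + (Jnot M i - (n - M.card)) + 1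

/-! ### Linear algebra -/

/-- The standard basis vector `e_i` of `ℂ^N` in 1-based indexing (zero if `i ∉ [1,N]`). -/
def eb (N : ℕ) (i : ℕ) : Fin N → ℂ := fun r => if (r : ℕ) + 1 = i then 1 else 0

/-- The nilpotent matrix of Jordan type `(n, N-n)`: `X e_i = e_{i-1}` for `i ∉ {1, n+1}`
(1-based) and `X e_1 = X e_{n+1} = 0`. -/
def Xmat (N n : ℕ) : Matrix (Fin N) (Fin N) ℂ :=
  Matrix.of fun r c => if (c : ℕ) = (r : ℕ) + 1 ∧ (c : ℕ) ≠ n then 1 else 0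

/-- Column `c` of `g` as a vector. -/
def col {N : ℕ} (g : Matrix (Fin N) (Fin N) ℂ) (c : Fin N) : Fin N → ℂ := fun r => g r c

/-- Span of the first `i` columns of `g` (1-based: columns `1,…,i`). -/
def spanCols {N : ℕ} (g : Matrix (Fin N) (Fin N) ℂ) (i : ℕ) : Submodule ℂ (Fin N → ℂ) :=
  Submodule.span ℂ {w | ∃ c : Fin N, (c : ℕ) < i ∧ w = col g c}

/-- The flag of `g` lies in the Springer fiber of `Xmat N n`. -/
def SpringerCond (N n : ℕ) (g : Matrix (Fin N) (Fin N) ℂ) : Prop :=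
  ∀ i : ℕ, ∀ v ∈ spanCols g i, (Xmat N n).mulVec v ∈ spanCols g i

/-- `g` is in canonical form with pivot of column `c` in row `σ c`: each pivot equals 1 and is
the lowest nonzero entry of its column, and entries to the right of a pivot vanish.  The pivots
form the permutation matrix of `σ`. -/
def CanonicalWithPerm {N : ℕ} (g : Matrix (Fin N) (Fin N) ℂ) (σ : Equiv.Perm (Fin N)) : Prop :=
  (∀ c, g (σ c) c = 1) ∧
  (∀ c r, σ c < r → g r c = 0) ∧
  (∀ c c' : Fin N, c < c' → g (σ c) c' = 0)

/-- The permutation matrix of `σ`. -/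
def permMat {N : ℕ} (σ : Equiv.Perm (Fin N)) : Matrix (Fin N) (Fin N) ℂ :=
  Matrix.of fun r c => if r = σ c then 1 else 0

/-- `r_0(α) = J_end(init α) + max{J_not(init α), n - k}`. -/
def r0 (n : ℕ) (M : Finset Arc) (a : Arc) : ℕ :=
  Jend M a.1 + max (Jnot M a.1) (n - M.card)

/-- Extend coordinates indexed by arcs of `M` by zero (this encodes `v₀ = 0`). -/
def extv (M : Finset Arc) (v : Arc → ℂ) : Arc → ℂ := fun a => if a ∈ M then v a else 0

/-- `ι_{α,M}(v) = Σ_{j ≥ 1} v_{anc^{j-1} α} e_{r₀(α)+j}`. -/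
def iota (N n : ℕ) (M : Finset Arc) (v : Arc → ℂ) (a : Arc) : Fin N → ℂ :=
  fun r => if r0 n M a ≤ (r : ℕ) then extv M v ((anc M)^[(r : ℕ) - r0 n M a] a) else 0

/-- The matrix `Im(v)`, whose column `init α` is `ι_{α,M}(v)` and whose other columns vanish. -/
def ImM (N n : ℕ) (M : Finset Arc) (v : Arc → ℂ) : Matrix (Fin N) (Fin N) ℂ :=
  Matrix.of fun r c =>
    if h : ∃ a ∈ M, a.1 = (c : ℕ) + 1 then iota N n M v h.choose r else 0

/-- The permutation matrix of `w_M`. -/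
def wMat (N n : ℕ) (M : Finset Arc) : Matrix (Fin N) (Fin N) ℂ :=
  Matrix.of fun r c => if (r : ℕ) + 1 = wM n M ((c : ℕ) + 1) then 1 else 0

/-- `f_M(v) = w_M + Im(v)`. -/
def fM (N n : ℕ) (M : Finset Arc) (v : Arc → ℂ) : Matrix (Fin N) (Fin N) ℂ :=
  wMat N n M + ImM N n M v

end TwoRowSpringer

/-!
Writing `B = g⁻¹ Xᵏ g` for the matrix of `Xᵏ` in the basis of columns of `g`, the inclusion
`Xᵏ V_i(g) ⊆ V_j(g)` says exactly that the block of `B` with rows `≥ j` and columns `< i`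
vanishes. Conjugation by `g` is continuous at invertible `g`, and the vanishing of a block of
entries is a closed condition, so it passes to the limit.
-/

open Filter Topology
open scoped Matrix

namespace TwoRowSpringer

variable {N : ℕ}

lemma col_eq_mulVec_single (g : Matrix (Fin N) (Fin N) ℂ) (c : Fin N) :
    col g c = g *ᵥ Pi.single c 1 :=
  (Matrix.mulVec_single_one g c).symm

lemma col_mem_spanCols (g : Matrix (Fin N) (Fin N) ℂ) {i : ℕ} {c : Fin N} (hc : (c : ℕ) < i) :
    col g c ∈ spanCols g i :=
  Submodule.subset_span ⟨c, hc, rfl⟩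

lemma mem_spanCols_iff {g : Matrix (Fin N) (Fin N) ℂ} (hg : IsUnit g) {j : ℕ}
    {v : Fin N → ℂ} :
    v ∈ spanCols g j ↔ ∀ r : Fin N, j ≤ (r : ℕ) → (g⁻¹ *ᵥ v) r = 0 := by
  have hdet : IsUnit g.det := (Matrix.isUnit_iff_isUnit_det g).mp hg
  constructor
  · intro hv
    induction hv using Submodule.span_induction with
    | mem w hw =>
      obtain ⟨c, hc, rfl⟩ := hw
      intro r hr
      have hrc : r ≠ c := by rintro rfl; omega
      rw [col_eq_mulVec_single, Matrix.mulVec_mulVec, Matrix.nonsing_inv_mul g hdet,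
        Matrix.one_mulVec, Pi.single_eq_of_ne hrc]
    | zero => simp
    | add x y _ _ hx hy => intro r hr; simp [Matrix.mulVec_add, hx r hr, hy r hr]
    | smul a x _ hx => intro r hr; simp [Matrix.mulVec_smul, hx r hr]
  · intro hv
    have hsum : v = ∑ c : Fin N, (g⁻¹ *ᵥ v) c • col g c := by
      conv_lhs => rw [← Matrix.one_mulVec v, ← Matrix.mul_nonsing_inv g hdet,
        ← Matrix.mulVec_mulVec]
      ext r
      simp [Matrix.mulVec, dotProduct, col, mul_comm]
    rw [hsum]
    refine Submodule.sum_mem _ fun c _ => ?_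
    by_cases hc : (c : ℕ) < j
    · exact Submodule.smul_mem _ _ (col_mem_spanCols g hc)
    · simp [hv c (not_lt.mp hc)]

lemma mapsTo_spanCols_iff {g : Matrix (Fin N) (Fin N) ℂ} (hg : IsUnit g)
    (A : Matrix (Fin N) (Fin N) ℂ) (i j : ℕ) :
    (∀ u ∈ spanCols g i, A *ᵥ u ∈ spanCols g j) ↔
      ∀ r c : Fin N, j ≤ (r : ℕ) → (c : ℕ) < i → (g⁻¹ * A * g) r c = 0 := by
  constructor
  · intro hA r c hr hc
    have := mem_spanCols_iff hg |>.mp (hA _ (col_mem_spanCols g hc)) r hr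
    rwa [col_eq_mulVec_single, Matrix.mulVec_mulVec, Matrix.mulVec_mulVec,
      Matrix.mulVec_single_one, Matrix.col_apply] at this
  · intro hB u hu
    rw [mem_spanCols_iff hg]
    intro r hr
    have hdet : IsUnit g.det := (Matrix.isUnit_iff_isUnit_det g).mp hg
    have hconj : g⁻¹ *ᵥ (A *ᵥ u) = (g⁻¹ * A * g) *ᵥ (g⁻¹ *ᵥ u) := by
      rw [Matrix.mulVec_mulVec, Matrix.mulVec_mulVec, Matrix.mul_assoc _ g,
        Matrix.mul_nonsing_inv g hdet, Matrix.mul_one]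
    rw [hconj]
    change ∑ c, (g⁻¹ * A * g) r c * (g⁻¹ *ᵥ u) c = 0
    refine Finset.sum_eq_zero fun c _ => ?_
    by_cases hc : (c : ℕ) < i
    · exact mul_eq_zero_of_left (hB r c hr hc) _
    · exact mul_eq_zero_of_right _ ((mem_spanCols_iff hg).mp hu c (not_lt.mp hc))

lemma isClosed_setOf_block_eq_zero (i j : ℕ) :
    IsClosed {B : Matrix (Fin N) (Fin N) ℂ |
      ∀ r c : Fin N, j ≤ (r : ℕ) → (c : ℕ) < i → B r c = 0} := by
  simp only [Set.ofPred_forall]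
  exact isClosed_iInter fun r => isClosed_iInter fun c => isClosed_iInter fun _ =>
    isClosed_iInter fun _ => isClosed_eq (continuous_id.matrix_elem r c) continuous_const

lemma tendsto_conj_of_isUnit {ι : Type*} {l : Filter ι} {g : ι → Matrix (Fin N) (Fin N) ℂ}
    {g' : Matrix (Fin N) (Fin N) ℂ} (hg : Tendsto g l (𝓝 g')) (hg' : IsUnit g')
    (A : Matrix (Fin N) (Fin N) ℂ) :
    Tendsto (fun m => (g m)⁻¹ * A * g m) l (𝓝 (g'⁻¹ * A * g')) := by
  obtain ⟨d, hd⟩ := (Matrix.isUnit_iff_isUnit_det g').mp hg'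
  have hinv : ContinuousAt Inv.inv g' :=
    continuousAt_matrix_inv g' (hd ▸ NormedRing.inverse_continuousAt d)
  exact ((hinv.tendsto.comp hg).mul tendsto_const_nhds).mul hg

theorem image_condition_in_limit_general
    (N : ℕ) (X : Matrix (Fin N) (Fin N) ℂ)
    (g : ℕ → Matrix (Fin N) (Fin N) ℂ) (g' : Matrix (Fin N) (Fin N) ℂ)
    (hinv : ∀ m : ℕ, IsUnit (g m)) (hinv' : IsUnit g')
    (hconv : ∀ r c : Fin N,
      Filter.Tendsto (fun m : ℕ => g m r c) Filter.atTop (nhds (g' r c)))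
    (k : ℕ) (i j : ℕ)
    (h : ∀ m : ℕ, ∀ u ∈ spanCols (g m) i, (X ^ k).mulVec u ∈ spanCols (g m) j) :
    ∀ u ∈ spanCols g' i, (X ^ k).mulVec u ∈ spanCols g' j := by
  have hg : Tendsto g atTop (𝓝 g') :=
    tendsto_pi_nhds.mpr fun r => tendsto_pi_nhds.mpr (hconv r)
  rw [mapsTo_spanCols_iff hinv']
  exact (isClosed_setOf_block_eq_zero i j).mem_of_tendsto
    (tendsto_conj_of_isUnit hg hinv' (X ^ k)) (Eventually.of_forall fun m =>
      (mapsTo_spanCols_iff (hinv m) _ i j).mp (h m))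

/-- Lemma 5.3.  If a sequence of invertible matrices converges entrywise to
an invertible matrix, and `X^k` maps the span of the first `i` columns into the span of the
first `j` columns for every matrix in the sequence, then the same holds for the limit. -/
theorem image_condition_in_limit
    (N : ℕ) (X : Matrix (Fin N) (Fin N) ℂ)
    (g : ℕ → Matrix (Fin N) (Fin N) ℂ) (g' : Matrix (Fin N) (Fin N) ℂ)
    (hinv : ∀ m : ℕ, IsUnit (g m)) (hinv' : IsUnit g')
    (hconv : ∀ r c : Fin N,
      Filter.Tendsto (fun m : ℕ => g m r c) Filter.atTop (nhds (g' r c)))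
    (k : ℕ) (i j : ℕ) (hi1 : 1 ≤ i) (hiN : i ≤ N) (hj1 : 1 ≤ j) (hjN : j ≤ N)
    (h : ∀ m : ℕ, ∀ u ∈ spanCols (g m) i, (X ^ k).mulVec u ∈ spanCols (g m) j) :
    ∀ u ∈ spanCols g' i, (X ^ k).mulVec u ∈ spanCols g' j :=
  image_condition_in_limit_general N X g g' hinv hinv' hconv k i j h

end TwoRowSpringer
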